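/- There exists a model refuting commutativity of Peano addition even with trivial induction hypotheses: on the universe U = ℕ ⊔ ℤ, interpret plus by plus(i,j) = i+j, plus(i,j') = (i+j)', plus(i',j) = (i+j)', plus(i',j') = (i+j+1)' if j ≥ 0 and (i+j-1)' otherwise. Then this interpretation satisfies the recurrence plus(n,m) = if isZ n then m else S (plus (pred n) m) for all n,m in U, yet plus(0', (-1)') ≠ plus((-1)', 0'), so plus is not commutative in this model. -/
import Mathlib


abbrev U := ℕ ⊕ ℤ

def Z : U := Sum.inl 0

def S : U → U
  | Sum.inl i => Sum.inl (i + 1)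
  | Sum.inr i => Sum.inr (i + 1)

def pred : U → U
  | Sum.inl i => Sum.inl (i - 1)
  | Sum.inr i => Sum.inr (i - 1)

def isZ (u : U) : Prop := u = Sum.inl 0

instance : DecidablePred isZ := fun u => decEq u (Sum.inl 0)

def plus : U → U → U
  | Sum.inl i, Sum.inl j => Sum.inl (i + j)
  | Sum.inl i, Sum.inr j => Sum.inr ((i : ℤ) + j)
  | Sum.inr i, Sum.inl j => Sum.inr (i + (j : ℤ))
  | Sum.inr i, Sum.inr j => if 0 ≤ j then Sum.inr (i + j + 1) else Sum.inr (i + j - 1)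

theorem nonstandard_model_refutes_commutativity :
    (∀ n m : U, plus n m = if isZ n then m else S (plus (pred n) m)) ∧
    plus (Sum.inr 0) (Sum.inr (-1)) ≠ plus (Sum.inr (-1)) (Sum.inr 0) ∧
    ¬ (∀ n m : U, plus n m = plus m n) := by
  refine ⟨?_, ?_, ?_⟩
  · rintro (i | i) (j | j)
    · rcases i with _ | i
      · simp [plus, isZ]
      · have : ¬ isZ (Sum.inl (i+1) : U) := by simp [isZ]
        simp only [if_neg this, plus, pred, S]
        congr 1
        omega
    · rcases i with _ | i
      · simp [plus, isZ]
      · have : ¬ isZ (Sum.inl (i+1) : U) := by simp [isZ]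
        simp only [if_neg this, plus, pred, S]
        congr 1
        push_cast
        omega
    · have : ¬ isZ (Sum.inr i : U) := by simp [isZ]
      simp only [if_neg this, plus, pred, S]
      congr 1; omega
    · have : ¬ isZ (Sum.inr i : U) := by simp [isZ]
      simp only [if_neg this, plus, pred]
      by_cases h : (0:ℤ) ≤ j <;> simp [h, S] <;> omega
  · decide
  · intro h
    have := h (Sum.inr 0) (Sum.inr (-1))
    simp [plus] at this
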